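/- Let G be a finite group and let n be a positive integer. Then the inverse subsemigroup length of the Brandt semigroup B(G,n) satisfies l*(B(G,n)) = n(l(G) + 2) − 1. -/

import Mathlib

/-- The length of a finite group `G`: the largest `k` such that there is a strictly
increasing chain of subgroups `G₀ < G₁ < ⋯ < G_k` of `G`. -/
noncomputable def groupLength (G : Type*) [Group G] : ℕ :=
  sSup {k : ℕ | ∃ c : Fin (k + 1) → Subgroup G, StrictMono c}

/-- The Brandt semigroup `B(G,n)`: elements `({1,…,n} × G × {1,…,n}) ∪ {0}`, with the
zero represented by `none`. -/
def Brandt (G : Type*) (n : ℕ) : Type _ :=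
  Option (Fin n × G × Fin n)

/-- Multiplication in the Brandt semigroup:
`(i,g,j)(k,h,l) = (i,gh,l)` if `j = k` and `0` otherwise; `0` is absorbing. -/
instance {G : Type*} [Mul G] {n : ℕ} : Mul (Brandt G n) :=
  ⟨fun a b =>
    match a, b with
    | some (i, g, j), some (k, h, l) =>
        if j = k then (some (i, g * h, l) : Brandt G n) else (none : Brandt G n)
    | _, _ => (none : Brandt G n)⟩

/-- The (unique, semigroup-theoretic) inverse of an element of the Brandt semigroup:
`(i,g,j)⁻¹ = (j,g⁻¹,i)` and `0⁻¹ = 0`. -/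
def brandtInv {G : Type*} [Group G] {n : ℕ} : Brandt G n → Brandt G n
  | none => (none : Brandt G n)
  | some (i, g, j) => (some (j, g⁻¹, i) : Brandt G n)

/-- The inverse subsemigroup length `l*` of the Brandt semigroup: the largest `k` for
which there is a strictly increasing chain of `k + 1` non-empty inverse subsemigroups
(subsemigroups closed under the inverse operation). -/
noncomputable def brandtInverseLength (G : Type*) [Group G] (n : ℕ) : ℕ :=
  sSup {k : ℕ | ∃ c : Fin (k + 1) → Subsemigroup (Brandt G n),
    StrictMono c ∧ ∀ i, ((c i : Set (Brandt G n))).Nonempty ∧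
      ∀ x ∈ c i, brandtInv x ∈ c i}

/-!
Upper bound: give an inverse subsemigroup `S` the weight `[0 ∈ S] + ∑ᵢ wᵢ(S)`, where
`wᵢ(S) = 0` if `(i, 1, i) ∉ S`, `wᵢ(S) = l(G) + 2` if `S` links `i` to a smaller index, and
otherwise `wᵢ(S) = h(Hᵢ) + 1`, with `Hᵢ = {g | (i, g, i) ∈ S}` and `h` the height in the lattice
of subgroups. If `S ≤ T` are inverse subsemigroups and no `wᵢ` grows, then `T ⊆ S`: multiplying
a nonzero element of `T` by elements of `S` that link its indices to smaller ones leads to an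
element `(i, g, i)` with `i` linked in neither `S` nor `T`, and there equal weights force equal
diagonal subgroups. As index `0` is never linked, the weight is at most
`1 + (l(G) + 1) + (n - 1)(l(G) + 2) = n(l(G) + 2)`, and it is at least `1`.

Lower bound: for a longest chain of subgroups `H₀ < ⋯ < H_l = G`, the chain
`{0} < {0} ∪ (0, H₀, 0) < ⋯ < {0} ∪ (0, H_l, 0) = B(G, 1)`, continued for `a = 1, …, n - 1` by
`B(G, a) ∪ (a, H₀, a) < ⋯ < B(G, a) ∪ (a, H_l, a) < B(G, a + 1)`, has `n(l(G) + 2)` members.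
-/

open Order

section GroupLength

variable {G : Type*} [Group G] [Finite G]

lemma bddAbove_subgroupChainLengths :
    BddAbove {k : ℕ | ∃ c : Fin (k + 1) → Subgroup G, StrictMono c} := by
  have := Fintype.ofFinite (Subgroup G)
  exact ⟨Fintype.card (Subgroup G), fun k ⟨c, hc⟩ => (LTSeries.mk k c hc).length_lt_card.le⟩

lemma length_le_groupLength (p : LTSeries (Subgroup G)) : p.length ≤ groupLength G :=
  le_csSup bddAbove_subgroupChainLengths ⟨p, p.strictMono⟩

lemma exists_ltSeries_length_eq_groupLength_last_eq_top :
    ∃ p : LTSeries (Subgroup G), p.length = groupLength G ∧ p.last = ⊤ := by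
  obtain ⟨c, hc⟩ : groupLength G ∈ {k : ℕ | ∃ c : Fin (k + 1) → Subgroup G, StrictMono c} :=
    Nat.sSup_mem ⟨0, fun _ => ⊤, Subsingleton.strictMono (α := Fin 1) _⟩
      bddAbove_subgroupChainLengths
  let p := LTSeries.mk _ c hc
  refine ⟨p, rfl, ?_⟩
  by_contra hp
  have := length_le_groupLength (p.snoc ⊤ (lt_top_iff_ne_top.2 hp))
  simp [p] at this

lemma height_le_groupLength (H : Subgroup G) : height H ≤ groupLength G :=
  height_le fun p _ => by exact_mod_cast length_le_groupLength p

lemma height_subgroup_lt_top (H : Subgroup G) : height H < ⊤ :=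
  (height_le_groupLength H).trans_lt (ENat.natCast_lt_top _)

noncomputable def subgroupHeight (H : Subgroup G) : ℕ := (height H).toNat

lemma natCast_subgroupHeight (H : Subgroup G) : (subgroupHeight H : ℕ∞) = height H :=
  ENat.natCast_toNat (height_subgroup_lt_top H).ne

lemma subgroupHeight_le_groupLength (H : Subgroup G) : subgroupHeight H ≤ groupLength G :=
  ENat.toNat_le_of_le_natCast (height_le_groupLength H)

lemma subgroupHeight_strictMono : StrictMono (subgroupHeight (G := G)) := fun H K hHK => by
  have := height_strictMono hHK (height_subgroup_lt_top H)
  rwa [← natCast_subgroupHeight, ← natCast_subgroupHeight, Nat.cast_lt] at this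

end GroupLength

namespace Brandt

section Basic

variable {G : Type*} {n : ℕ}

instance : Zero (Brandt G n) := ⟨none⟩

def mk (i : Fin n) (g : G) (j : Fin n) : Brandt G n := some (i, g, j)

@[elab_as_elim, induction_eliminator]
def recZeroMk {motive : Brandt G n → Sort*} (zero : motive 0)
    (mk : ∀ i g j, motive (mk i g j)) : ∀ x, motive x
  | none => zero
  | some (i, g, j) => mk i g j

variable [Mul G]

lemma mk_mul_mk (i : Fin n) (g : G) (j k : Fin n) (h : G) (l : Fin n) :
    mk i g j * mk k h l = if j = k then mk i (g * h) l else 0 := rfl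

@[simp] lemma mk_mul_mk_self (i : Fin n) (g : G) (j : Fin n) (h : G) (l : Fin n) :
    mk i g j * mk j h l = mk i (g * h) l := if_pos rfl

@[simp] lemma mk_mul_zero (i : Fin n) (g : G) (j : Fin n) : mk i g j * 0 = 0 := rfl

end Basic

variable {G : Type*} [Group G] {n : ℕ}

@[simp] lemma brandtInv_mk (i : Fin n) (g : G) (j : Fin n) :
    brandtInv (mk i g j) = mk j g⁻¹ i := rfl

section Weight

variable {S T : Subsemigroup (Brandt G n)} {i j : Fin n} {g : G}

def InvClosed (S : Subsemigroup (Brandt G n)) : Prop := ∀ x ∈ S, brandtInv x ∈ S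

lemma InvClosed.mk_inv_mem (hS : InvClosed S) (hx : mk i g j ∈ S) : mk j g⁻¹ i ∈ S := hS _ hx

lemma InvClosed.mk_one_mem_left (hS : InvClosed S) (hx : mk i g j ∈ S) : mk i 1 i ∈ S := by
  simpa using S.mul_mem hx (hS.mk_inv_mem hx)

lemma InvClosed.mk_one_mem_right (hS : InvClosed S) (hx : mk i g j ∈ S) : mk j 1 j ∈ S := by
  simpa using S.mul_mem (hS.mk_inv_mem hx) hx

def diagSubgroup (S : Subsemigroup (Brandt G n)) (i : Fin n) : Subgroup G :=
  Subgroup.closure {g | mk i g i ∈ S}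

lemma diagSubgroup_mono (hST : S ≤ T) (i : Fin n) : diagSubgroup S i ≤ diagSubgroup T i :=
  Subgroup.closure_mono fun _ hg => hST hg

lemma InvClosed.mem_diagSubgroup (hS : InvClosed S) (hi : mk i 1 i ∈ S) :
    g ∈ diagSubgroup S i ↔ mk i g i ∈ S := by
  let H : Subgroup G :=
    { carrier := {g | mk i g i ∈ S}
      one_mem' := hi
      mul_mem' := fun ha hb => by simpa using S.mul_mem ha hb
      inv_mem' := hS.mk_inv_mem }
  change g ∈ Subgroup.closure (H : Set G) ↔ g ∈ H
  rw [Subgroup.closure_eq]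

def Linked (S : Subsemigroup (Brandt G n)) (i : Fin n) : Prop :=
  ∃ j < i, ∃ g, mk i g j ∈ S

lemma Linked.mono (hST : S ≤ T) (h : Linked S i) : Linked T i :=
  let ⟨j, hj, g, hg⟩ := h; ⟨j, hj, g, hST hg⟩

open scoped Classical in
noncomputable def weight (S : Subsemigroup (Brandt G n)) (i : Fin n) : ℕ :=
  if Linked S i then groupLength G + 2
  else if mk i 1 i ∈ S then subgroupHeight (diagSubgroup S i) + 1 else 0

lemma weight_of_linked (h : Linked S i) : weight S i = groupLength G + 2 := by
  simp [weight, h]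

lemma weight_of_not_linked (h : ¬ Linked S i) (hi : mk i 1 i ∈ S) :
    weight S i = subgroupHeight (diagSubgroup S i) + 1 := by
  simp [weight, h, hi]

lemma weight_pos (hi : mk i 1 i ∈ S) : 0 < weight S i := by
  unfold weight
  split_ifs <;> omega

lemma InvClosed.mk_one_mem_of_weight_le (hS : InvClosed S) (hw : weight T i ≤ weight S i)
    (hi : mk i 1 i ∈ T) : mk i 1 i ∈ S := by
  by_contra hiS
  have : ¬ Linked S i := fun ⟨j, _, g, hg⟩ => hiS (hS.mk_one_mem_left hg)
  have := weight_pos hi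
  simp_all [weight]

variable [Finite G]

lemma weight_le_of_not_linked (h : ¬ Linked S i) : weight S i ≤ groupLength G + 1 := by
  have := subgroupHeight_le_groupLength (diagSubgroup S i)
  unfold weight
  split_ifs <;> omega

lemma weight_le (S : Subsemigroup (Brandt G n)) (i : Fin n) : weight S i ≤ groupLength G + 2 := by
  by_cases h : Linked S i
  · exact (weight_of_linked h).le
  · exact (weight_le_of_not_linked h).trans (Nat.le_succ _)

lemma weight_mono (hST : S ≤ T) (i : Fin n) : weight S i ≤ weight T i := by
  by_cases hT : Linked T i
  · rw [weight_of_linked hT]; exact weight_le S i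
  have hS : ¬ Linked S i := fun h => hT (h.mono hST)
  by_cases hi : mk i 1 i ∈ S
  · rw [weight_of_not_linked hS hi, weight_of_not_linked hT (hST hi)]
    exact Nat.succ_le_succ (subgroupHeight_strictMono.monotone (diagSubgroup_mono hST i))
  · simp [weight, hS, hi]

lemma not_linked_of_weight_le (hw : weight T i ≤ weight S i) (hS : ¬ Linked S i) :
    ¬ Linked T i := fun hT => by
  have := weight_le_of_not_linked hS
  rw [weight_of_linked hT] at hw
  omega

lemma diagSubgroup_le_of_weight_le (hST : S ≤ T) (hw : weight T i ≤ weight S i)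
    (hS : ¬ Linked S i) (hi : mk i 1 i ∈ S) : diagSubgroup T i ≤ diagSubgroup S i := by
  have hT := not_linked_of_weight_le hw hS
  rw [weight_of_not_linked hS hi, weight_of_not_linked hT (hST hi), Nat.add_le_add_iff_right] at hw
  exact ((diagSubgroup_mono hST i).eq_of_not_lt fun h =>
    (subgroupHeight_strictMono h).not_ge hw).ge

lemma mk_mem_of_forall_weight_le (hS : InvClosed S) (hT : InvClosed T) (hST : S ≤ T)
    (hw : ∀ i, weight T i ≤ weight S i) (hx : mk i g j ∈ T) : mk i g j ∈ S := by
  induction hm : (i : ℕ) + j using Nat.strong_induction_on generalizing i g j with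
  | _ m ih =>
  by_cases hi : Linked S i
  · obtain ⟨k, hk, h, hh⟩ := hi
    have : mk k (h⁻¹ * g) j ∈ S :=
      ih _ (by omega) (by simpa using T.mul_mem (hT.mk_inv_mem (hST hh)) hx) rfl
    simpa using S.mul_mem hh this
  by_cases hj : Linked S j
  · obtain ⟨k, hk, h, hh⟩ := hj
    have : mk i (g * h) k ∈ S := ih _ (by omega) (by simpa using T.mul_mem hx (hST hh)) rfl
    simpa using S.mul_mem this (hS.mk_inv_mem hh)
  obtain rfl : i = j := by
    rcases lt_trichotomy j i with h | rfl | h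
    · exact absurd ⟨j, h, g, hx⟩ (not_linked_of_weight_le (hw i) hi)
    · rfl
    · exact absurd ⟨i, h, g⁻¹, hT.mk_inv_mem hx⟩ (not_linked_of_weight_le (hw j) hj)
  have hiS := hS.mk_one_mem_of_weight_le (hw i) (hT.mk_one_mem_left hx)
  rw [← hS.mem_diagSubgroup hiS]
  exact diagSubgroup_le_of_weight_le hST (hw i) hi hiS
    ((hT.mem_diagSubgroup (hT.mk_one_mem_left hx)).2 hx)

end Weight

section TotalWeight

variable {S T : Subsemigroup (Brandt G n)}

open scoped Classical in
noncomputable def totalWeight (S : Subsemigroup (Brandt G n)) : ℕ :=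
  (if (0 : Brandt G n) ∈ S then 1 else 0) + ∑ i, weight S i

lemma one_le_totalWeight (hS : InvClosed S) (hne : (S : Set (Brandt G n)).Nonempty) :
    1 ≤ totalWeight S := by
  classical
  obtain ⟨x, hx⟩ := hne
  induction x with
  | zero => simp [totalWeight, SetLike.mem_coe.1 hx]
  | mk i g j =>
    have := weight_pos (hS.mk_one_mem_left hx)
    have := Finset.single_le_sum (fun p _ => Nat.zero_le (weight S p)) (Finset.mem_univ i)
    unfold totalWeight
    omega

variable [Finite G]

lemma totalWeight_lt_totalWeight (hS : InvClosed S) (hT : InvClosed T) (hST : S < T) :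
    totalWeight S < totalWeight T := by
  classical
  obtain ⟨x, hxT, hxS⟩ := SetLike.exists_of_lt hST
  have hsum : ∑ i, weight S i ≤ ∑ i, weight T i :=
    Finset.sum_le_sum fun i _ => weight_mono hST.le i
  induction x with
  | zero => simp only [totalWeight, hxT, hxS, if_true, if_false]; omega
  | mk i g j =>
    obtain ⟨p, hp⟩ : ∃ p, weight S p < weight T p := by
      by_contra! h
      exact hxS (mk_mem_of_forall_weight_le hS hT hST.le h hxT)
    have hsum_lt : ∑ i, weight S i < ∑ i, weight T i :=
      Finset.sum_lt_sum (fun i _ => weight_mono hST.le i) ⟨p, Finset.mem_univ p, hp⟩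
    have hzero : (if (0 : Brandt G n) ∈ S then 1 else 0) ≤
        if (0 : Brandt G n) ∈ T then 1 else 0 := by
      split_ifs with h0S h0T <;> first | omega | exact absurd (hST.le h0S) h0T
    unfold totalWeight
    omega

lemma totalWeight_le (hn : 0 < n) (S : Subsemigroup (Brandt G n)) :
    totalWeight S ≤ n * (groupLength G + 2) := by
  classical
  obtain ⟨m, rfl⟩ : ∃ m, n = m + 1 := Nat.exists_eq_add_one.2 hn
  have h0 : weight S 0 ≤ groupLength G + 1 :=
    weight_le_of_not_linked fun ⟨j, hj, _⟩ => Fin.not_lt_zero j hj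
  have hrest : ∑ i : Fin m, weight S i.succ ≤ m * (groupLength G + 2) := by
    simpa using Finset.sum_le_card_nsmul Finset.univ _ _ fun i _ => weight_le S (Fin.succ i)
  have hzero : (if (0 : Brandt G (m + 1)) ∈ S then 1 else 0) ≤ 1 := by split_ifs <;> omega
  calc totalWeight S ≤ 1 + (groupLength G + 1) + m * (groupLength G + 2) := by
        rw [totalWeight, Fin.sum_univ_succ]; omega
    _ = (m + 1) * (groupLength G + 2) := by ring

end TotalWeight

/-- `{0} ∪ {(i, g, j) | P i g j}`. -/
def ofPred (P : Fin n → G → Fin n → Prop)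
    (hP : ∀ {i g j h k}, P i g j → P j h k → P i (g * h) k) : Subsemigroup (Brandt G n) where
  carrier := {x | Brandt.recZeroMk True P x}
  mul_mem' {x y} hx hy := by
    induction x with
    | zero => trivial
    | mk i g j =>
      induction y with
      | zero => rw [mk_mul_zero]; trivial
      | mk k h l =>
        rw [mk_mul_mk]
        split_ifs with hjk
        · exact hP hx (hjk ▸ hy)
        · trivial

lemma ofPred_invClosed {P : Fin n → G → Fin n → Prop}
    {hP : ∀ {i g j h k}, P i g j → P j h k → P i (g * h) k}
    (hinv : ∀ {i g j}, P i g j → P j g⁻¹ i) : InvClosed (ofPred P hP) := by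
  intro x hx
  induction x with
  | zero => trivial
  | mk i g j => exact hinv hx

abbrev InverseSubsemigroup (G : Type*) [Group G] (n : ℕ) :=
  {S : Subsemigroup (Brandt G n) // (S : Set (Brandt G n)).Nonempty ∧ InvClosed S}

namespace InverseSubsemigroup

def ofPred (P : Fin n → G → Fin n → Prop)
    (hP : ∀ {i g j h k}, P i g j → P j h k → P i (g * h) k)
    (hinv : ∀ {i g j}, P i g j → P j g⁻¹ i) : InverseSubsemigroup G n :=
  ⟨Brandt.ofPred P hP, ⟨0, trivial⟩, ofPred_invClosed hinv⟩

lemma lt_of_mk_mem {S T : InverseSubsemigroup G n} (h0 : (0 : Brandt G n) ∈ T.1)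
    (hST : ∀ {i g j}, mk i g j ∈ S.1 → mk i g j ∈ T.1)
    (hsep : ∃ i g j, mk i g j ∈ T.1 ∧ mk i g j ∉ S.1) : S < T := by
  refine Subtype.coe_lt_coe.1 <| SetLike.lt_iff_le_and_exists.2 ⟨fun x hx => ?_, ?_⟩
  · induction x with
    | zero => exact h0
    | mk i g j => exact hST hx
  · obtain ⟨i, g, j, hT, hS⟩ := hsep
    exact ⟨mk i g j, hT, hS⟩

variable [Finite G]

lemma totalWeight_strictMono : StrictMono fun S : InverseSubsemigroup G n => totalWeight S.1 :=
  fun S T h => totalWeight_lt_totalWeight S.2.2 T.2.2 h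

lemma ltSeries_length_add_one_le (hn : 0 < n) (p : LTSeries (InverseSubsemigroup G n)) :
    p.length + 1 ≤ n * (groupLength G + 2) := by
  have := (p.map _ totalWeight_strictMono).head_add_length_le_nat
  have := one_le_totalWeight p.head.2.2 p.head.2.1
  have := totalWeight_le hn p.last.1
  simp only [LTSeries.head_map, LTSeries.last_map, LTSeries.map_length] at *
  omega

end InverseSubsemigroup

section Construction

variable {a : ℕ}

def block (a : ℕ) : InverseSubsemigroup G n :=
  .ofPred (fun i _ j => (i : ℕ) < a ∧ (j : ℕ) < a) (fun h₁ h₂ => ⟨h₁.1, h₂.2⟩) And.symm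

def corner (a : ℕ) (H : Subgroup G) : InverseSubsemigroup G n :=
  .ofPred (fun i g j => (i : ℕ) < a ∧ (j : ℕ) < a ∨ (i : ℕ) = a ∧ (j : ℕ) = a ∧ g ∈ H)
    (by rintro i g j h k (⟨hi, hj⟩ | ⟨hi, hj, hg⟩) (⟨hj', hk⟩ | ⟨hj', hk, hh⟩)
        · exact .inl ⟨hi, hk⟩
        · omega
        · omega
        · exact .inr ⟨hi, hk, mul_mem hg hh⟩)
    (by rintro i g j (⟨hi, hj⟩ | ⟨hi, hj, hg⟩)
        · exact .inl ⟨hj, hi⟩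
        · exact .inr ⟨hj, hi, inv_mem hg⟩)

@[simp] lemma mk_mem_block {i j : Fin n} {g : G} :
    mk i g j ∈ (block a : InverseSubsemigroup G n).1 ↔ (i : ℕ) < a ∧ (j : ℕ) < a := Iff.rfl

@[simp] lemma mk_mem_corner {H : Subgroup G} {i j : Fin n} {g : G} :
    mk i g j ∈ (corner a H : InverseSubsemigroup G n).1 ↔
      (i : ℕ) < a ∧ (j : ℕ) < a ∨ (i : ℕ) = a ∧ (j : ℕ) = a ∧ g ∈ H := Iff.rfl

lemma block_lt_corner (ha : a < n) (H : Subgroup G) :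
    (block a : InverseSubsemigroup G n) < corner a H :=
  InverseSubsemigroup.lt_of_mk_mem trivial (fun h => Or.inl h) ⟨⟨a, ha⟩, 1, ⟨a, ha⟩, by simp⟩

lemma corner_strictMono (ha : a < n) :
    StrictMono (corner a : Subgroup G → InverseSubsemigroup G n) := fun H K hHK => by
  obtain ⟨g, hgK, hgH⟩ := SetLike.exists_of_lt hHK
  refine InverseSubsemigroup.lt_of_mk_mem trivial ?_ ⟨⟨a, ha⟩, g, ⟨a, ha⟩, by simp [hgK, hgH]⟩
  simp only [mk_mem_corner]
  rintro i g j (h | ⟨hi, hj, hg⟩)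
  exacts [.inl h, .inr ⟨hi, hj, hHK.le hg⟩]

lemma corner_top_lt_block (ha₀ : 0 < a) (ha : a < n) :
    (corner a ⊤ : InverseSubsemigroup G n) < block (a + 1) :=
  InverseSubsemigroup.lt_of_mk_mem trivial (by simp only [mk_mem_corner, mk_mem_block]; omega)
    ⟨⟨a, ha⟩, 1, ⟨0, by omega⟩, by simp; omega⟩

lemma corner_zero_top : (corner 0 ⊤ : InverseSubsemigroup G n) = block 1 := by
  refine Subtype.ext <| SetLike.ext fun x => ?_
  induction x with
  | zero => exact iff_of_true trivial trivial
  | mk i g j => simp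

lemma exists_ltSeries_last_eq_block [Finite G] (ha : a < n) :
    ∃ p : LTSeries (InverseSubsemigroup G n),
      p.length + 1 = (a + 1) * (groupLength G + 2) ∧ p.last = block (a + 1) := by
  obtain ⟨c, hlen, hlast⟩ := exists_ltSeries_length_eq_groupLength_last_eq_top (G := G)
  induction a with
  | zero =>
    refine ⟨(c.map (corner 0) (corner_strictMono ha)).cons (block 0)
      (by simpa using block_lt_corner ha _), ?_, ?_⟩
    · simp [hlen]
    · simp [hlast, corner_zero_top]
  | succ a ih =>
    obtain ⟨p, hp, hplast⟩ := ih (by omega)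
    let q := c.map (corner (a + 1)) (corner_strictMono ha)
    refine ⟨(p.append q (by simpa [q, hplast] using block_lt_corner ha _)).snoc (block (a + 2))
      (by simpa [q, hlast] using corner_top_lt_block a.succ_pos ha), ?_, by simp⟩
    simp only [RelSeries.snoc_length, RelSeries.append_length, q, LTSeries.map_length, hlen]
    linarith

end Construction

lemma brandtInverseLength_eq_of_ltSeries {N : ℕ}
    (hle : ∀ p : LTSeries (InverseSubsemigroup G n), p.length ≤ N)
    (hex : ∃ p : LTSeries (InverseSubsemigroup G n), p.length = N) :
    brandtInverseLength G n = N := by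
  obtain ⟨p, rfl⟩ := hex
  refine IsGreatest.csSup_eq ⟨⟨fun i => (p i).1, (Subtype.strictMono_coe _).comp p.strictMono,
    fun i => (p i).2⟩, ?_⟩
  rintro k ⟨c, hc, hP⟩
  exact hle (LTSeries.mk k (fun i => ⟨c i, hP i⟩) fun _ _ h => hc h)

end Brandt

open Brandt

/-- Let `G` be a finite group and `n` a positive integer.  Then the inverse subsemigroup
length of the Brandt semigroup `B(G,n)` satisfies `l*(B(G,n)) = n(l(G) + 2) − 1`. -/
theorem inverseLength_brandt (G : Type*) [Group G] [Fintype G] (n : ℕ) (hn : 0 < n) :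
    brandtInverseLength G n = n * (groupLength G + 2) - 1 := by
  refine brandtInverseLength_eq_of_ltSeries (fun p => ?_) ?_
  · have := InverseSubsemigroup.ltSeries_length_add_one_le hn p
    omega
  · obtain ⟨p, hp, -⟩ := exists_ltSeries_last_eq_block (G := G) (Nat.sub_one_lt_of_lt hn)
    exact ⟨p, by rw [Nat.sub_add_cancel hn] at hp; omega⟩
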